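/- arXiv:2306.13371 — 2 statements merged into one kernel-verified Lean document; each statement's English description precedes it below -/
import Mathlib

section
/- Let ρ ∈ (−1,1) and let U, V be independent standard Gaussian real random variables on a probability space; set Z = V and Y = ρ·V + √(1−ρ²)·U. Then P(Y > 0 | Z ≤ 0) = 1/2 − (1/π)·arctan(ρ/√(1−ρ²)) and P(Y > 0 | Z > 0) = 1/2 + (1/π)·arctan(ρ/√(1−ρ²)). -/
/-!
In polar coordinates `(r cos θ, r sin θ)` the density of `N(0, v) ⊗ N(0, v)` is a function of `r`
alone, so every set cut out by a condition on `θ` has probability (angular measure) / 2π. With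
`a = arcsin ρ` and `(U, V) = (r cos θ, r sin θ)` one gets `Y = r cos (θ - a)` and `Z = r sin θ`,
so `{Y > 0, Z ≤ 0}` and `{Y > 0, Z > 0}` are the sectors `a - π/2 < θ ≤ 0` and
`0 < θ < a + π/2`. Finally `arcsin ρ = arctan (ρ / √(1 - ρ²))`.
-/

open MeasureTheory ProbabilityTheory Real Set
open scoped NNReal

theorem integral_Ioi_mul_exp_neg_mul_sq {b : ℝ} (hb : 0 < b) :
    ∫ r in Ioi (0 : ℝ), r * exp (-b * r ^ 2) = (2 * b)⁻¹ := by
  have h := integral_mul_cexp_neg_mul_sq (b := (b : ℂ)) (by simpa using hb)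
  have : ((∫ r in Ioi (0 : ℝ), r * exp (-b * r ^ 2) : ℝ) : ℂ) = ((2 * b)⁻¹ : ℝ) := by
    rw [← integral_complex_ofReal]; push_cast; exact h
  exact_mod_cast this

theorem gaussianPDFReal_zero_mul_gaussianPDFReal_zero (v : ℝ≥0) (x y : ℝ) :
    gaussianPDFReal 0 v x * gaussianPDFReal 0 v y
      = (2 * π * v)⁻¹ * exp (-(2 * v : ℝ)⁻¹ * (x ^ 2 + y ^ 2)) := by
  simp only [gaussianPDFReal, sub_zero]
  rw [mul_mul_mul_comm, ← exp_add, ← mul_inv, Real.mul_self_sqrt (by positivity)]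
  congr 2; ring

theorem gaussianReal_prod_gaussianReal (μ₁ μ₂ : ℝ) {v₁ v₂ : ℝ≥0} (hv₁ : v₁ ≠ 0) (hv₂ : v₂ ≠ 0) :
    (gaussianReal μ₁ v₁).prod (gaussianReal μ₂ v₂)
      = volume.withDensity (fun p : ℝ × ℝ => gaussianPDF μ₁ v₁ p.1 * gaussianPDF μ₂ v₂ p.2) := by
  rw [gaussianReal_of_var_ne_zero _ hv₁, gaussianReal_of_var_ne_zero _ hv₂,
    prod_withDensity (measurable_gaussianPDF _ _) (measurable_gaussianPDF _ _),
    Measure.volume_eq_prod]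

theorem lintegral_Ioi_radial_gaussian {v : ℝ≥0} (hv : v ≠ 0) :
    ∫⁻ r in Ioi (0 : ℝ), ENNReal.ofReal (r * ((2 * π * v)⁻¹ * exp (-(2 * v : ℝ)⁻¹ * r ^ 2)))
      = ENNReal.ofReal (2 * π)⁻¹ := by
  have hb : (0 : ℝ) < (2 * (v : ℝ))⁻¹ := by positivity
  have hcomm : ∀ r : ℝ, r * ((2 * π * v)⁻¹ * exp (-(2 * v : ℝ)⁻¹ * r ^ 2))
      = (2 * π * v)⁻¹ * (r * exp (-(2 * v : ℝ)⁻¹ * r ^ 2)) := fun r => by ring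
  simp_rw [hcomm]
  rw [← ofReal_integral_eq_lintegral_ofReal]
  · rw [integral_const_mul, integral_Ioi_mul_exp_neg_mul_sq hb]
    congr 1; field_simp
  · exact ((integrable_mul_exp_neg_mul_sq hb).integrableOn).const_mul _
  · filter_upwards [ae_restrict_mem measurableSet_Ioi] with r (hr : 0 < r)
    positivity

theorem gaussianReal_prod_real_eq_of_polar_angle {v : ℝ≥0} (hv : v ≠ 0)
    {S : Set (ℝ × ℝ)} (hS : MeasurableSet S) {t : Set ℝ} (ht : MeasurableSet t)
    (ht_sub : t ⊆ Ioo (-π) π)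
    (hSt : ∀ r θ, 0 < r → θ ∈ Ioo (-π) π → ((r * cos θ, r * sin θ) ∈ S ↔ θ ∈ t)) :
    ((gaussianReal 0 v).prod (gaussianReal 0 v)).real S = volume.real t / (2 * π) := by
  set F : ℝ → ℝ := fun r => r * ((2 * π * v)⁻¹ * exp (-(2 * v : ℝ)⁻¹ * r ^ 2))
  have hpolar : ∀ q ∈ polarCoord.target,
      ENNReal.ofReal q.1 • S.indicator
          (fun p : ℝ × ℝ => gaussianPDF 0 v p.1 * gaussianPDF 0 v p.2) (polarCoord.symm q)
        = (Ioi 0 ×ˢ t).indicator (fun q => ENNReal.ofReal (F q.1)) q := by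
    rintro ⟨r, θ⟩ ⟨hr, hθ⟩
    have hr : 0 < r := hr
    rw [polarCoord_symm_apply]
    by_cases hθt : θ ∈ t
    · rw [indicator_of_mem ((hSt r θ hr hθ).2 hθt),
        indicator_of_mem (mk_mem_prod (show r ∈ Ioi 0 from hr) hθt), smul_eq_mul, gaussianPDF,
        gaussianPDF, ← ENNReal.ofReal_mul (gaussianPDFReal_nonneg _ _ _),
        ← ENNReal.ofReal_mul hr.le, gaussianPDFReal_zero_mul_gaussianPDFReal_zero]
      simp only [F, mul_pow, ← mul_add, cos_sq_add_sin_sq, mul_one]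
    · rw [indicator_of_notMem (mt (hSt r θ hr hθ).1 hθt),
        indicator_of_notMem (fun h => hθt h.2), smul_zero]
  have htarget : polarCoord.target ∩ Ioi 0 ×ˢ t = Ioi 0 ×ˢ t :=
    inter_eq_right.2 (prod_mono_right ht_sub)
  rw [measureReal_def, gaussianReal_prod_gaussianReal 0 0 hv hv, withDensity_apply _ hS,
    ← lintegral_indicator hS, ← lintegral_comp_polarCoord_symm,
    setLIntegral_congr_fun polarCoord.open_target.measurableSet hpolar,
    lintegral_indicator (measurableSet_Ioi.prod ht), Measure.restrict_restrict
      (measurableSet_Ioi.prod ht), inter_comm, htarget, Measure.volume_eq_prod,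
    ← Measure.prod_restrict, lintegral_prod _ (by fun_prop)]
  simp only [lintegral_const, Measure.restrict_apply MeasurableSet.univ, univ_inter]
  rw [lintegral_mul_const _ (by fun_prop), lintegral_Ioi_radial_gaussian hv,
    ENNReal.toReal_mul, ENNReal.toReal_ofReal (by positivity), measureReal_def]
  ring

theorem cos_sub_pos_and_sin_pos_iff {a θ : ℝ} (ha : a ∈ Icc (-(π / 2)) (π / 2))
    (hθ : θ ∈ Ioo (-π) π) : 0 < cos (θ - a) ∧ 0 < sin θ ↔ θ ∈ Ioo 0 (a + π / 2) := by
  obtain ⟨ha₁, ha₂⟩ := ha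
  obtain ⟨hθ₁, hθ₂⟩ := hθ
  constructor
  · rintro ⟨hcos, hsin⟩
    have hθ_pos : 0 < θ := by
      by_contra! h
      exact (sin_nonpos_of_nonpos_of_neg_pi_le h hθ₁.le).not_gt hsin
    refine ⟨hθ_pos, ?_⟩
    by_contra! h
    exact (cos_nonpos_of_pi_div_two_le_of_le (by linarith) (by linarith)).not_gt hcos
  · rintro ⟨h₁, h₂⟩
    exact ⟨cos_pos_of_mem_Ioo ⟨by linarith, by linarith⟩, sin_pos_of_pos_of_lt_pi h₁ hθ₂⟩

theorem cos_sub_pos_and_sin_nonpos_iff {a θ : ℝ} (ha : a ∈ Ioc (-(π / 2)) (π / 2))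
    (hθ : θ ∈ Ioo (-π) π) : 0 < cos (θ - a) ∧ sin θ ≤ 0 ↔ θ ∈ Ioc (a - π / 2) 0 := by
  obtain ⟨ha₁, ha₂⟩ := ha
  obtain ⟨hθ₁, hθ₂⟩ := hθ
  constructor
  · rintro ⟨hcos, hsin⟩
    have hθ_nonpos : θ ≤ 0 := by
      by_contra! h
      exact (sin_pos_of_pos_of_lt_pi h hθ₂).not_ge hsin
    refine ⟨?_, hθ_nonpos⟩
    by_contra! h
    rw [← cos_neg, neg_sub] at hcos
    exact (cos_nonpos_of_pi_div_two_le_of_le (by linarith) (by linarith)).not_gt hcos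
  · rintro ⟨h₁, h₂⟩
    exact ⟨cos_pos_of_mem_Ioo ⟨by linarith, by linarith⟩,
      sin_nonpos_of_nonpos_of_neg_pi_le h₂ hθ₁.le⟩

theorem sin_mul_add_cos_mul_polar (a r θ : ℝ) :
    sin a * (r * sin θ) + cos a * (r * cos θ) = r * cos (θ - a) := by
  rw [cos_sub]; ring

section Wedge

variable {v : ℝ≥0} (hv : v ≠ 0) {a : ℝ}
include hv

theorem gaussianReal_prod_real_halfPlane_inter_upper (ha : a ∈ Icc (-(π / 2)) (π / 2)) :
    ((gaussianReal 0 v).prod (gaussianReal 0 v)).real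
      {p | 0 < sin a * p.2 + cos a * p.1 ∧ 0 < p.2} = (a + π / 2) / (2 * π) := by
  rw [gaussianReal_prod_real_eq_of_polar_angle hv (t := Ioo 0 (a + π / 2)) (by measurability)
    measurableSet_Ioo (fun θ hθ => ⟨by linarith [hθ.1, pi_pos], by linarith [hθ.2, ha.2]⟩)
    fun r θ hr hθ => ?_, Real.volume_real_Ioo_of_le (by linarith [ha.1, pi_pos]), sub_zero]
  simp only [mem_ofPred_eq, sin_mul_add_cos_mul_polar, mul_pos_iff_of_pos_left hr]
  exact cos_sub_pos_and_sin_pos_iff ha hθ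

theorem gaussianReal_prod_real_halfPlane_inter_lower (ha : a ∈ Ioc (-(π / 2)) (π / 2)) :
    ((gaussianReal 0 v).prod (gaussianReal 0 v)).real
      {p | 0 < sin a * p.2 + cos a * p.1 ∧ p.2 ≤ 0} = (π / 2 - a) / (2 * π) := by
  rw [gaussianReal_prod_real_eq_of_polar_angle hv (t := Ioc (a - π / 2) 0) (by measurability)
    measurableSet_Ioc (fun θ hθ => ⟨by linarith [hθ.1, ha.1], by linarith [hθ.2, pi_pos]⟩)
    fun r θ hr hθ => ?_, Real.volume_real_Ioc_of_le (by linarith [ha.2, pi_pos]), zero_sub,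
    neg_sub]
  have hr_nonpos : r * sin θ ≤ 0 ↔ sin θ ≤ 0 := by
    rw [← not_lt, mul_pos_iff_of_pos_left hr, not_lt]
  simp only [mem_ofPred_eq, sin_mul_add_cos_mul_polar, mul_pos_iff_of_pos_left hr, hr_nonpos]
  exact cos_sub_pos_and_sin_nonpos_iff ha hθ

theorem gaussianReal_prod_real_upper :
    ((gaussianReal 0 v).prod (gaussianReal 0 v)).real {p | 0 < p.2} = 1 / 2 := by
  have h := gaussianReal_prod_real_halfPlane_inter_upper hv (a := π / 2)
    ⟨by linarith [pi_pos], le_rfl⟩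
  simp only [sin_pi_div_two, cos_pi_div_two, one_mul, zero_mul, add_zero, and_self] at h
  rw [h, add_halves]
  field_simp

theorem gaussianReal_prod_real_lower :
    ((gaussianReal 0 v).prod (gaussianReal 0 v)).real {p | p.2 ≤ 0} = 1 / 2 := by
  have h := probReal_compl_eq_one_sub (μ := (gaussianReal 0 v).prod (gaussianReal 0 v))
    (measurableSet_lt (measurable_const (a := (0 : ℝ))) measurable_snd)
  rw [gaussianReal_prod_real_upper hv] at h
  simp only [compl_ofPred, not_lt] at h
  rw [h]; norm_num

end Wedge

/-- For a centered bivariate Gaussian pair `(Y, Z)` with unit variances and correlation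
`ρ ∈ (-1, 1)`, built from independent standard Gaussians `U, V` as `Z = V` and
`Y = ρ V + √(1-ρ²) U`, we have
`P(Y > 0 | Z ≤ 0) = 1/2 - (1/π) arctan(ρ/√(1-ρ²))` and
`P(Y > 0 | Z > 0) = 1/2 + (1/π) arctan(ρ/√(1-ρ²))`,
where `P(A|B) = P(A ∩ B)/P(B)`. -/
theorem gaussian_conditional_probabilities
    {Ω : Type*} [MeasurableSpace Ω] (P : Measure Ω) [IsProbabilityMeasure P]
    (ρ : ℝ) (hρ : ρ ∈ Set.Ioo (-1 : ℝ) 1)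
    (U V : Ω → ℝ) (hUm : Measurable U) (hVm : Measurable V)
    (hU : P.map U = gaussianReal 0 1) (hV : P.map V = gaussianReal 0 1)
    (hUV : IndepFun U V P)
    (Y Z : Ω → ℝ)
    (hY : Y = fun ω => ρ * V ω + Real.sqrt (1 - ρ ^ 2) * U ω)
    (hZ : Z = V) :
    (P ({ω | 0 < Y ω} ∩ {ω | Z ω ≤ 0})).toReal / (P {ω | Z ω ≤ 0}).toReal
        = 1 / 2 - 1 / π * Real.arctan (ρ / Real.sqrt (1 - ρ ^ 2)) ∧
      (P ({ω | 0 < Y ω} ∩ {ω | 0 < Z ω})).toReal / (P {ω | 0 < Z ω}).toReal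
        = 1 / 2 + 1 / π * Real.arctan (ρ / Real.sqrt (1 - ρ ^ 2)) := by
  set μ := (gaussianReal 0 1).prod (gaussianReal 0 1)
  have hlaw : ∀ s, MeasurableSet s → P.real ((fun ω => (U ω, V ω)) ⁻¹' s) = μ.real s := by
    intro s hs
    rw [← map_measureReal_apply (hUm.prodMk hVm) hs,
      (indepFun_iff_map_prod_eq_prod_map_map hUm.aemeasurable hVm.aemeasurable).1 hUV, hU, hV]
  set a := arcsin ρ
  have ha : a ∈ Ioo (-(π / 2)) (π / 2) :=
    ⟨neg_pi_div_two_lt_arcsin.2 hρ.1, arcsin_lt_pi_div_two.2 hρ.2⟩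
  have hsin : sin a = ρ := sin_arcsin hρ.1.le hρ.2.le
  have hcos : cos a = √(1 - ρ ^ 2) := cos_arcsin ρ
  have h_lower : P.real ({ω | 0 < ρ * V ω + √(1 - ρ ^ 2) * U ω} ∩ {ω | V ω ≤ 0})
      = (π / 2 - a) / (2 * π) := by
    rw [← gaussianReal_prod_real_halfPlane_inter_lower one_ne_zero (Ioo_subset_Ioc_self ha), hsin,
      hcos, ← hlaw _ (by measurability)]
    rfl
  have h_upper : P.real ({ω | 0 < ρ * V ω + √(1 - ρ ^ 2) * U ω} ∩ {ω | 0 < V ω})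
      = (a + π / 2) / (2 * π) := by
    rw [← gaussianReal_prod_real_halfPlane_inter_upper one_ne_zero (Ioo_subset_Icc_self ha), hsin,
      hcos, ← hlaw _ (by measurability)]
    rfl
  have hV_lower : P.real {ω | V ω ≤ 0} = 1 / 2 := by
    rw [← gaussianReal_prod_real_lower one_ne_zero, ← hlaw _ (by measurability)]; rfl
  have hV_upper : P.real {ω | 0 < V ω} = 1 / 2 := by
    rw [← gaussianReal_prod_real_upper one_ne_zero, ← hlaw _ (by measurability)]; rfl
  subst hY hZ
  simp only [← measureReal_def, ← arcsin_eq_arctan hρ, h_lower, h_upper, hV_lower, hV_upper]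
  constructor <;> field_simp <;> ring
end

section
/- For ρ ∈ (−1,1) define g(ρ) = 1 + f(1/2 − (1/π)·arctan(ρ/√(1−ρ²))) + f(1/2 + (1/π)·arctan(ρ/√(1−ρ²))), where f(x) = x·log₂(x) for x > 0 and f(0) = 0. Then g is an even function of ρ and is strictly increasing on [0,1). Consequently, the map 𝓗 ↦ g(2^{2𝓗−1} − 1), giving the market information of a fractional Brownian motion with Hurst exponent 𝓗, is strictly decreasing on (0,1/2] and strictly increasing on [1/2,1): the market information increases as 𝓗 moves away from 1/2. -/
open Real

/-- `f x = x log₂ x`, with the convention `f 0 = 0`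
(automatic in Lean since `Real.logb 2 0 = 0`). -/
noncomputable def f (x : ℝ) : ℝ := x * Real.logb 2 x

/-- The market information of a correlation `ρ ∈ (-1,1)`:
`g ρ = 1 + f(1/2 - (1/π) arctan(ρ/√(1-ρ²))) + f(1/2 + (1/π) arctan(ρ/√(1-ρ²)))`. -/
noncomputable def g (ρ : ℝ) : ℝ :=
  1 + f (1 / 2 - 1 / π * Real.arctan (ρ / Real.sqrt (1 - ρ ^ 2)))
    + f (1 / 2 + 1 / π * Real.arctan (ρ / Real.sqrt (1 - ρ ^ 2)))

/-!
Writing `p = 1/2 + arcsin ρ / π`, the two arguments of `f` in `g ρ` are `p` and `1 - p`, so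
`g ρ = 1 - h(p)` with `h` the binary entropy in bits. Negating `ρ` swaps the two arguments, hence
`g` is even; as `ρ` runs through `[0, 1)`, `p` increases through `[1/2, 1)`, where `h` is strictly
decreasing. For the Hurst exponent, compose with the strictly increasing `𝓗 ↦ 2^(2𝓗-1) - 1`,
which maps `[1/2, 1)` into `[0, 1)` and `(0, 1/2]` into `(-1/2, 0]`, using evenness on the latter.
-/

open Set

lemma f_add_f_one_sub (p : ℝ) : f p + f (1 - p) = -binEntropy p / log 2 := by
  simp only [f, binEntropy, logb, log_inv]
  ring

lemma g_eq_one_sub_binEntropy {ρ : ℝ} (hρ : ρ ∈ Ioo (-1) 1) :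
    g ρ = 1 - binEntropy (1 / 2 + arcsin ρ / π) / log 2 := by
  have h_sum := f_add_f_one_sub (1 / 2 + arcsin ρ / π)
  rw [g, ← arcsin_eq_arctan hρ, show 1 / 2 - 1 / π * arcsin ρ = 1 - (1 / 2 + arcsin ρ / π) by ring,
    show 1 / 2 + 1 / π * arcsin ρ = 1 / 2 + arcsin ρ / π by ring]
  linear_combination h_sum

lemma g_neg (ρ : ℝ) : g (-ρ) = g ρ := by
  simp only [g, neg_sq, neg_div, arctan_neg, mul_neg, sub_neg_eq_add, ← sub_eq_add_neg]
  ring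

lemma half_add_arcsin_div_pi_mem {ρ : ℝ} (hρ : ρ ∈ Ico 0 1) :
    1 / 2 + arcsin ρ / π ∈ Icc 2⁻¹ 1 := by
  have h_nonneg : 0 ≤ arcsin ρ / π := div_nonneg (arcsin_nonneg.2 hρ.1) pi_pos.le
  have h_lt : arcsin ρ / π < 1 / 2 := by
    rw [div_lt_iff₀ pi_pos]
    linarith [arcsin_lt_pi_div_two.2 hρ.2]
  constructor <;> linarith

lemma strictMonoOn_g : StrictMonoOn g (Ico 0 1) := by
  intro x hx y hy hxy
  have hIoo : ∀ ρ ∈ Ico (0 : ℝ) 1, ρ ∈ Ioo (-1) 1 := fun ρ hρ => ⟨by linarith [hρ.1], hρ.2⟩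
  have h_arcsin : arcsin x < arcsin y :=
    strictMonoOn_arcsin (Ioo_subset_Icc_self (hIoo x hx)) (Ioo_subset_Icc_self (hIoo y hy)) hxy
  have h_entropy : binEntropy (1 / 2 + arcsin y / π) < binEntropy (1 / 2 + arcsin x / π) :=
    binEntropy_strictAntiOn (half_add_arcsin_div_pi_mem hx) (half_add_arcsin_div_pi_mem hy)
      (by gcongr)
  rw [g_eq_one_sub_binEntropy (hIoo x hx), g_eq_one_sub_binEntropy (hIoo y hy)]
  have h_log_two : 0 < log 2 := log_pos one_lt_two
  gcongr

noncomputable def hurstCorrelation (H : ℝ) : ℝ := 2 ^ (2 * H - 1) - 1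

lemma strictMono_hurstCorrelation : StrictMono hurstCorrelation := fun a b hab => by
  have : (2 : ℝ) ^ (2 * a - 1) < 2 ^ (2 * b - 1) :=
    rpow_lt_rpow_of_exponent_lt one_lt_two (by linarith)
  simpa [hurstCorrelation] using this

lemma hurstCorrelation_zero : hurstCorrelation 0 = -(1 / 2) := by
  norm_num [hurstCorrelation, rpow_neg_one]

lemma hurstCorrelation_half : hurstCorrelation (1 / 2) = 0 := by
  norm_num [hurstCorrelation]

lemma hurstCorrelation_one : hurstCorrelation 1 = 1 := by
  norm_num [hurstCorrelation]

lemma mapsTo_hurstCorrelation_Ico : MapsTo hurstCorrelation (Ico (1 / 2) 1) (Ico 0 1) := by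
  rintro H ⟨h_half_le, h_lt_one⟩
  rw [← hurstCorrelation_one, ← hurstCorrelation_half]
  exact ⟨strictMono_hurstCorrelation.monotone h_half_le, strictMono_hurstCorrelation h_lt_one⟩

lemma mapsTo_neg_hurstCorrelation_Ioc :
    MapsTo (fun H => -hurstCorrelation H) (Ioc 0 (1 / 2)) (Ico 0 1) := by
  rintro H ⟨h_pos, h_le_half⟩
  have h_gt := strictMono_hurstCorrelation h_pos
  have h_nonpos := strictMono_hurstCorrelation.monotone h_le_half
  rw [hurstCorrelation_zero] at h_gt
  rw [hurstCorrelation_half] at h_nonpos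
  constructor <;> linarith

/-- `g` is even on `(-1,1)` and strictly increasing on `[0,1)`; consequently the market
information `𝓗 ↦ g(2^(2𝓗-1) - 1)` of an fBm is strictly decreasing on `(0, 1/2]` and
strictly increasing on `[1/2, 1)`: it increases as `𝓗` moves away from `1/2`. -/
theorem market_information_even_and_monotone :
    (∀ ρ ∈ Set.Ioo (-1 : ℝ) 1, g (-ρ) = g ρ) ∧
    StrictMonoOn g (Set.Ico (0 : ℝ) 1) ∧
    StrictAntiOn (fun H : ℝ => g ((2 : ℝ) ^ (2 * H - 1) - 1)) (Set.Ioc (0 : ℝ) (1 / 2)) ∧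
    StrictMonoOn (fun H : ℝ => g ((2 : ℝ) ^ (2 * H - 1) - 1)) (Set.Ico (1 / 2 : ℝ) 1) := by
  refine ⟨fun ρ _ => g_neg ρ, strictMonoOn_g, ?_, ?_⟩
  · have h_even :
        (fun H : ℝ => g ((2 : ℝ) ^ (2 * H - 1) - 1)) = g ∘ fun H => -hurstCorrelation H :=
      funext fun H => (g_neg _).symm
    rw [h_even]
    exact strictMonoOn_g.comp_strictAntiOn (strictMono_hurstCorrelation.neg.strictAntiOn _)
      mapsTo_neg_hurstCorrelation_Ioc
  · exact strictMonoOn_g.comp (strictMono_hurstCorrelation.strictMonoOn _)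
      mapsTo_hurstCorrelation_Ico
end
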